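/- The generalized Jacobi polynomial J_k^{(-1,-2)}(x) = (1−x)(1+x)² R_{k-3}^{(1,2)}(x) admits, for k ≥ 3, the Legendre expansion J_k^{(-1,-2)}(x) = (2/(2k−3)) [L_{k-3}(x) + ((2k−3)/(2k−1)) L_{k-2}(x) − L_{k-1}(x) − ((2k−3)/(2k−1)) L_k(x)]. -/

import Mathlib

/-!
In the variable `t = (x - 1) / 2` the hypergeometric sum defining `P_n^{(a,b)}` makes
`R_n^{(a,b)}` a polynomial whose `t^m`-coefficient is the ratio of Pochhammer symbols
`n(n-1)⋯(n-m+1) · (a+b+n+1)_m / (m! (a+1)_m)`. Since `1 + x = 2(1 + t)` and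
`1 - x² = -4(t + t²)`, the two contiguous relations
`(2n+a+b+2)(1+x) R_n^{(a,b+1)} = 2(n+b+1) R_n^{(a,b)} + 2(n+a+1) R_{n+1}^{(a,b)}` and
`(2n+2a+3)(1-x²) R_n^{(a+1,a+1)} = 2(a+1) (R_n^{(a,a)} - R_{n+2}^{(a,a)})`
reduce to identities between rational functions of `n` and `m`, coefficient by coefficient.
Then `(1-x)(1+x)² R_{k-3}^{(1,2)} = (1-x²)(R_{k-3}^{(1,1)} + R_{k-2}^{(1,1)})`, and the second
relation with `a = 0` expands both terms in Legendre polynomials.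
-/

/-- Classical Jacobi polynomial `P_n^{(a,b)}(x)` (real parameters), via the
hypergeometric sum representation. -/
noncomputable def jacobiP (n : ℕ) (a b x : ℝ) : ℝ :=
  (Real.Gamma (a + n + 1) / (n.factorial * Real.Gamma (a + b + n + 1))) *
    ∑ m ∈ Finset.range (n + 1),
      (n.choose m : ℝ) * (Real.Gamma (a + b + n + m + 1) / Real.Gamma (a + m + 1)) *
        ((x - 1) / 2) ^ m

/-- Normalized Jacobi polynomial `R_n^{(a,b)}(x) = P_n^{(a,b)}(x)/P_n^{(a,b)}(1)`. -/
noncomputable def jacobiR (n : ℕ) (a b x : ℝ) : ℝ := jacobiP n a b x / jacobiP n a b 1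

/-- Legendre polynomial `L_n = P_n^{(0,0)}`. -/
noncomputable def legendreL (n : ℕ) (x : ℝ) : ℝ := jacobiP n 0 0 x

open Finset Polynomial
open scoped Nat

theorem Real.Gamma_add_nat_eq_mul_ascPochhammer {s : ℝ} (hs : 0 < s) (m : ℕ) :
    Real.Gamma (s + m) = Real.Gamma s * (ascPochhammer ℝ m).eval s := by
  induction m with
  | zero => simp
  | succ m ih =>
    rw [Nat.cast_succ, ← add_assoc, Real.Gamma_add_one (by positivity), ih,
      ascPochhammer_succ_eval]
    ring

theorem ascPochhammer_succ_eval_left {S : Type*} [CommSemiring S] (m : ℕ) (y : S) :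
    (ascPochhammer S (m + 1)).eval y = y * (ascPochhammer S m).eval (y + 1) := by
  simp [ascPochhammer_succ_left]

theorem descPochhammer_succ_eval_left {R : Type*} [CommRing R] (m : ℕ) (y : R) :
    (descPochhammer R (m + 1)).eval y = y * (descPochhammer R m).eval (y - 1) := by
  simp [descPochhammer_succ_left]

noncomputable def jacobiCoeff (n : ℕ) (a b : ℝ) (m : ℕ) : ℝ :=
  (descPochhammer ℝ m).eval (n : ℝ) * (ascPochhammer ℝ m).eval (a + b + n + 1) /
    (m ! * (ascPochhammer ℝ m).eval (a + 1))

noncomputable def jacobiPoly (n : ℕ) (a b : ℝ) : ℝ[X] :=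
  ∑ m ∈ range (n + 1), C (jacobiCoeff n a b m) * X ^ m

@[simp]
theorem jacobiCoeff_zero (n : ℕ) (a b : ℝ) : jacobiCoeff n a b 0 = 1 := by
  simp [jacobiCoeff]

theorem jacobiCoeff_of_lt {n m : ℕ} (h : n < m) (a b : ℝ) : jacobiCoeff n a b m = 0 := by
  simp [jacobiCoeff, descPochhammer_eval_coe_nat_of_lt h]

@[simp]
theorem coeff_jacobiPoly (n : ℕ) (a b : ℝ) (m : ℕ) :
    (jacobiPoly n a b).coeff m = jacobiCoeff n a b m := by
  simp only [jacobiPoly, finsetSum_coeff, coeff_C_mul_X_pow]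
  rw [Finset.sum_ite_eq, ite_eq_left_iff]
  intro hm
  exact (jacobiCoeff_of_lt (by simpa using hm) a b).symm

theorem jacobiP_eq_mul_eval_jacobiPoly {n : ℕ} {a b : ℝ} (ha : 0 < a + 1)
    (hab : 0 < a + b + n + 1) (x : ℝ) :
    jacobiP n a b x =
      (ascPochhammer ℝ n).eval (a + 1) / n ! * (jacobiPoly n a b).eval ((x - 1) / 2) := by
  have hΓ : ∀ m : ℕ, Real.Gamma (a + b + n + m + 1) / Real.Gamma (a + m + 1) =
      Real.Gamma (a + b + n + 1) / Real.Gamma (a + 1) *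
        ((ascPochhammer ℝ m).eval (a + b + n + 1) / (ascPochhammer ℝ m).eval (a + 1)) := by
    intro m
    rw [show a + b + n + m + 1 = a + b + n + 1 + m by ring, show a + m + 1 = a + 1 + m by ring,
      Real.Gamma_add_nat_eq_mul_ascPochhammer hab, Real.Gamma_add_nat_eq_mul_ascPochhammer ha]
    ring
  have hΓ₀ := Real.Gamma_pos_of_pos hab
  rw [jacobiP, show a + n + 1 = a + 1 + n by ring, Real.Gamma_add_nat_eq_mul_ascPochhammer ha,
    jacobiPoly, eval_finsetSum, mul_sum, mul_sum]
  refine sum_congr rfl fun m _ => ?_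
  rw [hΓ, Nat.cast_choose_eq_descPochhammer_div, eval_mul, eval_C, eval_pow, eval_X, jacobiCoeff]
  field_simp

theorem jacobiR_eq_eval_jacobiPoly {n : ℕ} {a b : ℝ} (ha : 0 < a + 1)
    (hab : 0 < a + b + n + 1) (x : ℝ) :
    jacobiR n a b x = (jacobiPoly n a b).eval ((x - 1) / 2) := by
  have hP₁ : 0 < (ascPochhammer ℝ n).eval (a + 1) / n ! :=
    div_pos (ascPochhammer_pos n _ ha) (by positivity)
  rw [jacobiR, jacobiP_eq_mul_eval_jacobiPoly ha hab, jacobiP_eq_mul_eval_jacobiPoly ha hab,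
    sub_self, zero_div, ← coeff_zero_eq_eval_zero, coeff_jacobiPoly, jacobiCoeff_zero, mul_one,
    mul_div_cancel_left₀ _ hP₁.ne']

theorem legendreL_eq_jacobiR (n : ℕ) (x : ℝ) : legendreL n x = jacobiR n 0 0 x := by
  have h₀ : (0 : ℝ) < 0 + 1 := by norm_num
  have hn : (0 : ℝ) < 0 + 0 + n + 1 := by positivity
  rw [jacobiR_eq_eval_jacobiPoly h₀ hn, legendreL, jacobiP_eq_mul_eval_jacobiPoly h₀ hn, zero_add,
    ascPochhammer_eval_one, div_self (by positivity), one_mul]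

theorem jacobiCoeff_relation_one_add_X {a : ℝ} (ha : 0 < a + 1) (b : ℝ) (n i : ℕ) :
    (2 * n + a + b + 2) * (jacobiCoeff n a (b + 1) (i + 1) + jacobiCoeff n a (b + 1) i) =
      (n + b + 1) * jacobiCoeff n a b (i + 1) + (n + a + 1) * jacobiCoeff (n + 1) a b (i + 1) := by
  have hD₁ := descPochhammer_succ_eval i (n : ℝ)
  have hD₂ : (descPochhammer ℝ (i + 1)).eval ((n + 1 : ℕ) : ℝ) =
      (n + 1) * (descPochhammer ℝ i).eval (n : ℝ) := by
    rw [descPochhammer_succ_eval_left]; push_cast; rw [add_sub_cancel_right]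
  have hA₀ : (ascPochhammer ℝ i).eval (a + (b + 1) + n + 1) =
      (ascPochhammer ℝ i).eval (a + b + n + 2) := by ring_nf
  have hA₁ : (ascPochhammer ℝ (i + 1)).eval (a + (b + 1) + n + 1) =
      (ascPochhammer ℝ i).eval (a + b + n + 2) * (a + b + n + 2 + i) := by
    rw [ascPochhammer_succ_eval, hA₀]; ring
  have hA₂ : (ascPochhammer ℝ (i + 1)).eval (a + b + n + 1) =
      (a + b + n + 1) * (ascPochhammer ℝ i).eval (a + b + n + 2) := by
    rw [ascPochhammer_succ_eval_left]; ring_nf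
  have hA₃ : (ascPochhammer ℝ (i + 1)).eval (a + b + ((n + 1 : ℕ) : ℝ) + 1) =
      (ascPochhammer ℝ i).eval (a + b + n + 2) * (a + b + n + 2 + i) := by
    rw [ascPochhammer_succ_eval]; push_cast; ring_nf
  have hQ := ascPochhammer_succ_eval i (a + 1)
  have hQ₀ : 0 < (ascPochhammer ℝ i).eval (a + 1) := ascPochhammer_pos i _ ha
  have hi : (0 : ℝ) < a + 1 + i := by positivity
  simp only [jacobiCoeff, hD₁, hD₂, hA₀, hA₁, hA₂, hA₃, hQ, Nat.factorial_succ, Nat.cast_mul]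
  field_simp
  push_cast
  ring

theorem jacobiCoeff_relation_X_add_X_sq {a : ℝ} (ha : 0 < a + 1) (n i : ℕ) :
    (2 * n + 2 * a + 3) *
        (jacobiCoeff n (a + 1) (a + 1) (i + 1) + jacobiCoeff n (a + 1) (a + 1) i) =
      (a + 1) / 2 * (jacobiCoeff (n + 2) a a (i + 2) - jacobiCoeff n a a (i + 2)) := by
  have hD₁ := descPochhammer_succ_eval i (n : ℝ)
  have hD₂ := descPochhammer_succ_eval (i + 1) (n : ℝ)
  have hD₃ : (descPochhammer ℝ (i + 2)).eval ((n + 2 : ℕ) : ℝ) =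
      (n + 2) * (n + 1) * (descPochhammer ℝ i).eval (n : ℝ) := by
    rw [descPochhammer_succ_eval_left, descPochhammer_succ_eval_left]; push_cast; ring_nf
  have hA₀ : (ascPochhammer ℝ i).eval (a + 1 + (a + 1) + n + 1) =
      (ascPochhammer ℝ i).eval (2 * a + n + 3) := by ring_nf
  have hA₁ : (ascPochhammer ℝ (i + 1)).eval (a + 1 + (a + 1) + n + 1) =
      (ascPochhammer ℝ i).eval (2 * a + n + 3) * (2 * a + n + 3 + i) := by
    rw [ascPochhammer_succ_eval, hA₀]; ring
  have hA₂ : (ascPochhammer ℝ (i + 2)).eval (a + a + n + 1) =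
      (2 * a + n + 1) * (2 * a + n + 2) * (ascPochhammer ℝ i).eval (2 * a + n + 3) := by
    rw [ascPochhammer_succ_eval_left, ascPochhammer_succ_eval_left]; ring_nf
  have hA₃ : (ascPochhammer ℝ (i + 2)).eval (a + a + ((n + 2 : ℕ) : ℝ) + 1) =
      (ascPochhammer ℝ i).eval (2 * a + n + 3) * (2 * a + n + 3 + i) * (2 * a + n + 4 + i) := by
    rw [ascPochhammer_succ_eval, ascPochhammer_succ_eval]; push_cast; ring_nf
  have hQ₁ := ascPochhammer_succ_eval i (a + 1 + 1)
  have hQ₂ : (ascPochhammer ℝ (i + 2)).eval (a + 1) =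
      (a + 1) * (ascPochhammer ℝ i).eval (a + 1 + 1) * (a + 1 + 1 + i) := by
    rw [ascPochhammer_succ_eval_left, ascPochhammer_succ_eval]; ring
  have hQ₀ : 0 < (ascPochhammer ℝ i).eval (a + 1 + 1) := ascPochhammer_pos i _ (by linarith)
  have hi : (0 : ℝ) < a + 1 + 1 + i := by positivity
  simp only [jacobiCoeff, hD₁, hD₂, hD₃, hA₀, hA₁, hA₂, hA₃, hQ₁, hQ₂, Nat.factorial_succ,
    Nat.cast_mul]
  field_simp
  push_cast
  ring

theorem one_add_X_mul_jacobiPoly {a : ℝ} (ha : 0 < a + 1) (b : ℝ) (n : ℕ) :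
    C (2 * n + a + b + 2) * ((1 + X) * jacobiPoly n a (b + 1)) =
      C (n + b + 1) * jacobiPoly n a b + C (n + a + 1) * jacobiPoly (n + 1) a b := by
  ext (_ | i)
  · simp only [coeff_C_mul, coeff_add, add_mul, one_mul, coeff_X_mul_zero, coeff_jacobiPoly,
      jacobiCoeff_zero]
    ring
  · simp only [coeff_C_mul, coeff_add, add_mul, one_mul, coeff_X_mul, coeff_jacobiPoly]
    linear_combination jacobiCoeff_relation_one_add_X ha b n i

theorem X_add_X_sq_mul_jacobiPoly {a : ℝ} (ha : 0 < a + 1) (n : ℕ) :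
    C (2 * n + 2 * a + 3) * ((X + X ^ 2) * jacobiPoly n (a + 1) (a + 1)) =
      C ((a + 1) / 2) * (jacobiPoly (n + 2) a a - jacobiPoly n a a) := by
  rw [sq, add_mul, mul_assoc X X]
  ext (_ | _ | i)
  · simp
  · simp only [coeff_C_mul, coeff_add, coeff_sub, coeff_X_mul, coeff_X_mul_zero, coeff_jacobiPoly,
      jacobiCoeff_zero]
    simp only [zero_add, jacobiCoeff, descPochhammer_one, ascPochhammer_one, eval_X,
      Nat.factorial_one]
    push_cast
    field_simp
    ring
  · simp only [coeff_C_mul, coeff_add, coeff_sub, coeff_X_mul, coeff_jacobiPoly]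
    exact jacobiCoeff_relation_X_add_X_sq ha n i

theorem one_add_mul_jacobiR {a b : ℝ} {n : ℕ} (ha : 0 < a + 1) (hab : 0 < a + b + n + 1)
    (x : ℝ) :
    (2 * n + a + b + 2) * ((1 + x) * jacobiR n a (b + 1) x) =
      2 * (n + b + 1) * jacobiR n a b x + 2 * (n + a + 1) * jacobiR (n + 1) a b x := by
  have h := congrArg (eval ((x - 1) / 2)) (one_add_X_mul_jacobiPoly ha b n)
  simp only [eval_mul, eval_add, eval_C, eval_one, eval_X] at h
  rw [jacobiR_eq_eval_jacobiPoly ha (by linarith), jacobiR_eq_eval_jacobiPoly ha hab,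
    jacobiR_eq_eval_jacobiPoly ha (by push_cast; linarith)]
  linear_combination 2 * h

theorem one_sub_sq_mul_jacobiR {a : ℝ} {n : ℕ} (ha : 0 < a + 1) (han : 0 < a + a + n + 1)
    (x : ℝ) :
    (2 * n + 2 * a + 3) * ((1 - x ^ 2) * jacobiR n (a + 1) (a + 1) x) =
      2 * (a + 1) * (jacobiR n a a x - jacobiR (n + 2) a a x) := by
  have h := congrArg (eval ((x - 1) / 2)) (X_add_X_sq_mul_jacobiPoly ha n)
  simp only [eval_mul, eval_add, eval_sub, eval_C, eval_pow, eval_X] at h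
  rw [jacobiR_eq_eval_jacobiPoly (by linarith) (by linarith), jacobiR_eq_eval_jacobiPoly ha han,
    jacobiR_eq_eval_jacobiPoly ha (by push_cast; linarith)]
  linear_combination -4 * h

theorem one_add_mul_jacobiR_one_two (n : ℕ) (x : ℝ) :
    (1 + x) * jacobiR n 1 2 x = jacobiR n 1 1 x + jacobiR (n + 1) 1 1 x := by
  have h := one_add_mul_jacobiR (a := 1) (b := 1) (n := n) (by norm_num) (by positivity) x
  norm_num at h
  have hn : (2 * n + 4 : ℝ) ≠ 0 := by positivity
  apply mul_left_cancel₀ hn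
  linear_combination h

theorem one_sub_sq_mul_jacobiR_one_one (n : ℕ) (x : ℝ) :
    (1 - x ^ 2) * jacobiR n 1 1 x = 2 / (2 * n + 3) * (legendreL n x - legendreL (n + 2) x) := by
  have h := one_sub_sq_mul_jacobiR (a := 0) (n := n) (by norm_num) (by positivity) x
  norm_num at h
  rw [legendreL_eq_jacobiR, legendreL_eq_jacobiR, div_mul_eq_mul_div, eq_div_iff (by positivity)]
  linear_combination h

theorem genJacobi_neg1neg2_legendre (k : ℕ) (hk : 3 ≤ k) (x : ℝ) :
    (1 - x) * (1 + x) ^ 2 * jacobiR (k - 3) 1 2 x =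
      (2 / (2 * (k : ℝ) - 3)) *
        (legendreL (k - 3) x + ((2 * (k : ℝ) - 3) / (2 * (k : ℝ) - 1)) * legendreL (k - 2) x -
          legendreL (k - 1) x - ((2 * (k : ℝ) - 3) / (2 * (k : ℝ) - 1)) * legendreL k x) := by
  obtain ⟨n, rfl⟩ : ∃ n, k = n + 3 := ⟨k - 3, by omega⟩
  simp only [show n + 3 - 3 = n by omega, show n + 3 - 2 = n + 1 by omega,
    show n + 3 - 1 = n + 2 by omega,
    show 2 * ((n + 3 : ℕ) : ℝ) - 3 = 2 * n + 3 by push_cast; ring,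
    show 2 * ((n + 3 : ℕ) : ℝ) - 1 = 2 * n + 5 by push_cast; ring]
  have hn₃ : (2 * n + 3 : ℝ) ≠ 0 := by positivity
  have hn₅ : (2 * n + 5 : ℝ) ≠ 0 := by positivity
  calc (1 - x) * (1 + x) ^ 2 * jacobiR n 1 2 x
      = (1 - x ^ 2) * jacobiR n 1 1 x + (1 - x ^ 2) * jacobiR (n + 1) 1 1 x := by
        rw [← mul_add, ← one_add_mul_jacobiR_one_two]; ring
    _ = _ := by
        rw [one_sub_sq_mul_jacobiR_one_one, one_sub_sq_mul_jacobiR_one_one]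
        push_cast
        field_simp
        ring
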